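/- For any Hilbert B-module E, the map x₁ ⊙ (x₂* ⊙ y) ↦ ϑ(x₁x₂*)y, where ϑ is a strict unital homomorphism B^a(E) → B^a(F), is isometric: ⟨x₁ ⊙ (x₂* ⊙ y), x₁' ⊙ (x₂'* ⊙ y')⟩ = ⟨ϑ(x₁x₂*)y, ϑ(x₁'x₂'*)y'⟩. -/

import Mathlib

open scoped RightActions
open Filter Topology

noncomputable section

/-- The Hilbert C⋆-module class with the convention of the older Mathlib (right action of `A`
through `Aᵐᵒᵖ`, inner product `A`-linear in the second variable for that right action). -/
class RightCStarModule (A : outParam Type*) (E : Type*) [NonUnitalSemiring A] [StarRing A]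
    [Module ℂ A] [AddCommGroup E] [Module ℂ E] [PartialOrder A] [SMul Aᵐᵒᵖ E] [Norm A] [Norm E]
    extends Inner A E where
  inner_add_right {x} {y} {z} : inner x (y + z) = inner x y + inner x z
  inner_self_nonneg {x} : 0 ≤ inner x x
  inner_self {x} : inner x x = 0 ↔ x = 0
  inner_op_smul_right {a : A} {x y : E} : inner x (y <• a) = inner x y * a
  inner_smul_right_complex {z : ℂ} {x} {y} : inner x (z • y) = z • inner x y
  star_inner x y : star (inner x y) = inner y x
  norm_eq_sqrt_norm_inner_self x : ‖x‖ = √‖inner x x‖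

attribute [simp] RightCStarModule.inner_add_right RightCStarModule.star_inner
attribute [simp] RightCStarModule.inner_op_smul_right RightCStarModule.inner_smul_right_complex

namespace RightCStarModule

section general

variable {A E : Type*} [NonUnitalRing A] [StarRing A] [AddCommGroup E] [Module ℂ A]
  [Module ℂ E] [PartialOrder A] [SMul Aᵐᵒᵖ E] [Norm A] [Norm E] [RightCStarModule A E]

@[simp]
theorem inner_add_left {x y z : E} : inner A (x + y) z = inner A x z + inner A y z := by
  rw [← RightCStarModule.star_inner z, RightCStarModule.inner_add_right, star_add,
    RightCStarModule.star_inner, RightCStarModule.star_inner]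

@[simp]
theorem inner_op_smul_left {a : A} {x y : E} : inner A (x <• a) y = star a * inner A x y := by
  rw [← RightCStarModule.star_inner y, RightCStarModule.inner_op_smul_right, star_mul,
    RightCStarModule.star_inner]

@[simp]
theorem inner_smul_left_complex [StarModule ℂ A] {z : ℂ} {x y : E} :
    inner A (z • x) y = star z • inner A x y := by
  rw [← RightCStarModule.star_inner y, RightCStarModule.inner_smul_right_complex, star_smul,
    RightCStarModule.star_inner]

@[simp]
theorem inner_zero_right {x : E} : inner A x 0 = 0 := by
  rw [← zero_smul ℂ (0 : E), RightCStarModule.inner_smul_right_complex, zero_smul]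

@[simp]
theorem inner_zero_left {x : E} : inner A 0 x = 0 := by
  rw [← RightCStarModule.star_inner, RightCStarModule.inner_zero_right, star_zero]

@[simp]
theorem inner_neg_right {x y : E} : inner A x (-y) = -inner A x y := by
  rw [← neg_one_smul ℂ y, RightCStarModule.inner_smul_right_complex, neg_one_smul]

@[simp]
theorem inner_neg_left {x y : E} : inner A (-x) y = -inner A x y := by
  rw [← RightCStarModule.star_inner, RightCStarModule.inner_neg_right, star_neg,
    RightCStarModule.star_inner]

@[simp]
theorem inner_sub_right {x y z : E} : inner A x (y - z) = inner A x y - inner A x z := by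
  rw [sub_eq_add_neg, RightCStarModule.inner_add_right, RightCStarModule.inner_neg_right,
    ← sub_eq_add_neg]

@[simp]
theorem inner_sub_left {x y z : E} : inner A (x - y) z = inner A x z - inner A y z := by
  rw [sub_eq_add_neg, RightCStarModule.inner_add_left, RightCStarModule.inner_neg_left,
    ← sub_eq_add_neg]

theorem inner_smul_right_real {r : ℝ} {x y : E} : inner A x (r • y) = r • inner A x y := by
  have h₁ : r • y = (r : ℂ) • y := by simp
  rw [h₁, RightCStarModule.inner_smul_right_complex]
  simp

theorem inner_smul_left_real [StarModule ℂ A] {r : ℝ} {x y : E} :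
    inner A (r • x) y = r • inner A x y := by
  have h₁ : r • x = (r : ℂ) • x := by simp
  rw [h₁, RightCStarModule.inner_smul_left_complex]
  simp

end general

section norm

variable {A E : Type*} [NonUnitalCStarAlgebra A] [PartialOrder A] [StarOrderedRing A]
  [AddCommGroup E] [Module ℂ E] [SMul Aᵐᵒᵖ E] [Norm E] [RightCStarModule A E]

theorem norm_sq_eq {x : E} : ‖x‖ ^ 2 = ‖inner A x x‖ := by
  rw [RightCStarModule.norm_eq_sqrt_norm_inner_self (A := A) x, Real.sq_sqrt (norm_nonneg _)]

theorem inner_mul_inner_swap_le {x y : E} :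
    inner A y x * inner A x y ≤ ‖x‖ ^ 2 • inner A y y := by
  rcases eq_or_ne x 0 with h | h
  · subst h
    rw [RightCStarModule.inner_zero_right, zero_mul]
    exact smul_nonneg (sq_nonneg _) RightCStarModule.inner_self_nonneg
  · have hpos : 0 < ‖x‖ := by
      rw [RightCStarModule.norm_eq_sqrt_norm_inner_self (A := A) x, Real.sqrt_pos, norm_pos_iff]
      intro H
      exact h (RightCStarModule.inner_self.mp H)
    have h₁ : ∀ a : A, (0 : A) ≤ ‖x‖ ^ 2 • (star a * a) - ‖x‖ ^ 2 • (inner A y x * a)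
        - ‖x‖ ^ 2 • (star a * inner A x y) + ‖x‖ ^ 2 • (‖x‖ ^ 2 • inner A y y) := fun a => by
      calc (0 : A) ≤ inner A (x <• a - ‖x‖ ^ 2 • y) (x <• a - ‖x‖ ^ 2 • y) :=
            RightCStarModule.inner_self_nonneg
        _ = star a * inner A x x * a - ‖x‖ ^ 2 • (inner A y x * a)
            - ‖x‖ ^ 2 • (star a * inner A x y) + ‖x‖ ^ 2 • (‖x‖ ^ 2 • inner A y y) := by
            simp only [RightCStarModule.inner_sub_right, RightCStarModule.inner_sub_left,
              RightCStarModule.inner_op_smul_right, RightCStarModule.inner_op_smul_left,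
              RightCStarModule.inner_smul_right_real, RightCStarModule.inner_smul_left_real,
              sub_mul, smul_sub, smul_mul_assoc, mul_assoc]
            abel
        _ ≤ ‖x‖ ^ 2 • (star a * a) - ‖x‖ ^ 2 • (inner A y x * a)
            - ‖x‖ ^ 2 • (star a * inner A x y) + ‖x‖ ^ 2 • (‖x‖ ^ 2 • inner A y y) := by
            gcongr
            calc _ ≤ ‖inner A x x‖ • (star a * a) :=
                  CStarAlgebra.star_left_conjugate_le_norm_smul
                    (RightCStarModule.star_inner x x)
              _ = ‖x‖ ^ 2 • (star a * a) := by rw [RightCStarModule.norm_sq_eq]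
    have h2 := h₁ (inner A x y)
    rw [RightCStarModule.star_inner] at h2
    have h3 : ‖x‖ ^ 2 • (inner A y x * inner A x y) ≤ ‖x‖ ^ 2 • (‖x‖ ^ 2 • inner A y y) := by
      rw [← sub_nonneg]
      convert h2 using 1
      abel
    exact (smul_le_smul_iff_of_pos_left (pow_pos hpos 2)).mp h3

variable (E) in
theorem norm_inner_le {x y : E} : ‖inner A x y‖ ≤ ‖x‖ * ‖y‖ := by
  have := calc ‖inner A x y‖ ^ 2 = ‖inner A y x * inner A x y‖ := by
                rw [← RightCStarModule.star_inner x y, CStarRing.norm_star_mul_self, pow_two]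
    _ ≤ ‖‖x‖ ^ 2 • inner A y y‖ := by
                refine CStarAlgebra.norm_le_norm_of_nonneg_of_le ?_
                  RightCStarModule.inner_mul_inner_swap_le
                rw [← RightCStarModule.star_inner x y]
                exact star_mul_self_nonneg _
    _ = ‖x‖ ^ 2 * ‖inner A y y‖ := by
                rw [norm_smul, Real.norm_eq_abs, abs_of_nonneg (sq_nonneg _)]
    _ = ‖x‖ ^ 2 * ‖y‖ ^ 2 := by rw [RightCStarModule.norm_sq_eq (x := y)]
    _ = (‖x‖ * ‖y‖) ^ 2 := by rw [mul_pow]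
  exact (pow_le_pow_iff_left₀ (norm_nonneg _)
    (mul_nonneg
      (by rw [RightCStarModule.norm_eq_sqrt_norm_inner_self (A := A) x]; exact Real.sqrt_nonneg _)
      (by rw [RightCStarModule.norm_eq_sqrt_norm_inner_self (A := A) y]; exact Real.sqrt_nonneg _))
    two_ne_zero).mp this

end norm

/-- A C⋆-algebra as a Hilbert C⋆-module over itself, `⟪x, y⟫ = star x * y`. -/
instance instSelf {A : Type*} [NonUnitalCStarAlgebra A] [PartialOrder A] [StarOrderedRing A] :
    RightCStarModule A A where
  inner x y := star x * y
  inner_add_right := mul_add ..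
  inner_self_nonneg := star_mul_self_nonneg _
  inner_self := CStarRing.star_mul_self_eq_zero_iff _
  inner_op_smul_right := (mul_assoc _ _ _).symm
  inner_smul_right_complex := mul_smul_comm ..
  star_inner x y := by simp
  norm_eq_sqrt_norm_inner_self x := by
    rw [CStarRing.norm_star_mul_self, Real.sqrt_mul_self (norm_nonneg _)]

theorem inner_def {A : Type*} [NonUnitalCStarAlgebra A] [PartialOrder A] [StarOrderedRing A]
    (x y : A) : inner A x y = star x * y := rfl

end RightCStarModule

namespace CStarMod

set_option linter.unusedSectionVars false

variable {A : Type*} [CStarAlgebra A] [PartialOrder A] [StarOrderedRing A]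
variable {E : Type*} [NormedAddCommGroup E] [NormedSpace ℂ E] [SMul Aᵐᵒᵖ E] [RightCStarModule A E]
variable {F : Type*} [NormedAddCommGroup F] [NormedSpace ℂ F] [SMul Aᵐᵒᵖ F] [RightCStarModule A F]

/-- Two elements of a Hilbert C*-module agreeing against all inner products are equal. -/
theorem ext_inner_left {x y : E} (h : ∀ w : E, inner (𝕜 := A) w x = inner (𝕜 := A) w y) :
    x = y := by
  have h0 : (inner (𝕜 := A) (x - y) (x - y) : A) = 0 := by
    rw [RightCStarModule.inner_sub_right, h (x - y), sub_self]
  exact sub_eq_zero.mp (RightCStarModule.inner_self.mp h0)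

theorem op_smul_add (x : E) (a b : A) : x <• (a + b) = x <• a + x <• b := by
  apply ext_inner_left (A := A); intro w
  rw [RightCStarModule.inner_op_smul_right, RightCStarModule.inner_add_right,
    RightCStarModule.inner_op_smul_right, RightCStarModule.inner_op_smul_right, mul_add]

theorem op_smul_csmul (x : E) (c : ℂ) (a : A) : x <• (c • a) = c • (x <• a) := by
  apply ext_inner_left (A := A); intro w
  rw [RightCStarModule.inner_op_smul_right, RightCStarModule.inner_smul_right_complex,
    RightCStarModule.inner_op_smul_right, mul_smul_comm]

theorem op_smul_zero (x : E) : x <• (0 : A) = 0 := by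
  apply ext_inner_left (A := A); intro w
  rw [RightCStarModule.inner_op_smul_right, mul_zero, RightCStarModule.inner_zero_right]

theorem norm_op_smul_le (x : E) (a : A) : ‖x <• a‖ ≤ ‖x‖ * ‖a‖ := by
  have h1 : ‖x <• a‖ ^ 2 = ‖star a * inner (𝕜 := A) x x * a‖ := by
    rw [RightCStarModule.norm_sq_eq, RightCStarModule.inner_op_smul_right, RightCStarModule.inner_op_smul_left]
  have hx : ‖(inner (𝕜 := A) x x : A)‖ ≤ ‖x‖ * ‖x‖ := RightCStarModule.norm_inner_le E
  have h2 : ‖star a * inner (𝕜 := A) x x * a‖ ≤ ‖a‖ * (‖x‖ * ‖x‖) * ‖a‖ := by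
    calc ‖star a * inner (𝕜 := A) x x * a‖ ≤ ‖star a * inner (𝕜 := A) x x‖ * ‖a‖ :=
          norm_mul_le _ _
      _ ≤ ‖star a‖ * ‖(inner (𝕜 := A) x x : A)‖ * ‖a‖ := by
          gcongr; exact norm_mul_le _ _
      _ ≤ ‖a‖ * (‖x‖ * ‖x‖) * ‖a‖ := by rw [norm_star]; gcongr
  nlinarith [norm_nonneg (x <• a), norm_nonneg x, norm_nonneg a,
    mul_nonneg (norm_nonneg x) (norm_nonneg a)]

/-- An adjointable operator between Hilbert C*-modules over `A`. -/
structure Adj (A : Type*) [CStarAlgebra A] [PartialOrder A] [StarOrderedRing A]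
    (E : Type*) [NormedAddCommGroup E] [NormedSpace ℂ E] [SMul Aᵐᵒᵖ E] [RightCStarModule A E]
    (F : Type*) [NormedAddCommGroup F] [NormedSpace ℂ F] [SMul Aᵐᵒᵖ F] [RightCStarModule A F] :
    Type _ where
  toFun : E →L[ℂ] F
  adj : F →L[ℂ] E
  inner_adj : ∀ (x : E) (y : F), inner (𝕜 := A) (toFun x) y = inner (𝕜 := A) x (adj y)

namespace Adj

theorem adj_unique (f : E →L[ℂ] F) (g g' : F →L[ℂ] E)
    (h : ∀ x y, inner (𝕜 := A) (f x) y = inner (𝕜 := A) x (g y))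
    (h' : ∀ x y, inner (𝕜 := A) (f x) y = inner (𝕜 := A) x (g' y)) : g = g' := by
  ext y
  apply ext_inner_left (A := A); intro w
  rw [← h w y, h' w y]

instance : FunLike (Adj A E F) E F where
  coe a := a.toFun
  coe_injective a b h := by
    obtain ⟨f, g, hfg⟩ := a
    obtain ⟨f', g', hfg'⟩ := b
    have hf : f = f' := by ext x; exact congrFun h x
    subst hf
    have : g = g' := adj_unique f g g' hfg hfg'
    subst this; rfl

@[ext]
theorem ext {a b : Adj A E F} (h : ∀ x, a x = b x) : a = b := DFunLike.ext a b h

theorem inner_adj_apply (a : Adj A E F) (x : E) (y : F) :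
    inner (𝕜 := A) (a x) y = inner (𝕜 := A) x (a.adj y) := a.inner_adj x y

variable {G : Type*} [NormedAddCommGroup G] [NormedSpace ℂ G] [SMul Aᵐᵒᵖ G] [RightCStarModule A G]

/-- Composition of adjointable operators. -/
def comp (a : Adj A F G) (b : Adj A E F) : Adj A E G where
  toFun := a.toFun ∘L b.toFun
  adj := b.adj ∘L a.adj
  inner_adj x y := by
    simp only [ContinuousLinearMap.comp_apply]
    rw [a.inner_adj, b.inner_adj]

@[simp] theorem comp_apply (a : Adj A F G) (b : Adj A E F) (x : E) :
    (a.comp b) x = a (b x) := rfl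

/-- The adjoint, as an adjointable operator. -/
def star' (a : Adj A E F) : Adj A F E where
  toFun := a.adj
  adj := a.toFun
  inner_adj x y := by
    have := congrArg star (a.inner_adj y x)
    simpa using this.symm

@[simp] theorem star'_apply (a : Adj A E F) (y : F) : (star' a) y = a.adj y := rfl

instance : One (Adj A E E) :=
  ⟨{ toFun := ContinuousLinearMap.id ℂ E
     adj := ContinuousLinearMap.id ℂ E
     inner_adj := fun _ _ => rfl }⟩

instance : Mul (Adj A E E) := ⟨fun a b => a.comp b⟩

instance : Star (Adj A E E) := ⟨star'⟩

instance : Add (Adj A E F) :=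
  ⟨fun a b =>
    { toFun := a.toFun + b.toFun
      adj := a.adj + b.adj
      inner_adj := fun x y => by
        simp only [ContinuousLinearMap.add_apply, RightCStarModule.inner_add_left,
          RightCStarModule.inner_add_right, a.inner_adj, b.inner_adj] }⟩

instance : Zero (Adj A E F) :=
  ⟨{ toFun := 0
     adj := 0
     inner_adj := fun x y => by
       simp only [ContinuousLinearMap.zero_apply, RightCStarModule.inner_zero_left,
         RightCStarModule.inner_zero_right] }⟩

instance : Neg (Adj A E F) :=
  ⟨fun a =>
    { toFun := -a.toFun
      adj := -a.adj
      inner_adj := fun x y => by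
        simp only [ContinuousLinearMap.neg_apply, RightCStarModule.inner_neg_left,
          RightCStarModule.inner_neg_right, a.inner_adj] }⟩

instance : SMul ℂ (Adj A E F) :=
  ⟨fun c a =>
    { toFun := c • a.toFun
      adj := (starRingEnd ℂ c) • a.adj
      inner_adj := fun x y => by
        simp only [ContinuousLinearMap.smul_apply, RightCStarModule.inner_smul_left_complex,
          RightCStarModule.inner_smul_right_complex, a.inner_adj, starRingEnd_apply] }⟩

@[simp] theorem add_apply (a b : Adj A E F) (x : E) : (a + b) x = a x + b x := rfl
@[simp] theorem zero_apply (x : E) : (0 : Adj A E F) x = 0 := rfl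
@[simp] theorem neg_apply (a : Adj A E F) (x : E) : (-a) x = -(a x) := rfl
@[simp] theorem smul_apply (c : ℂ) (a : Adj A E F) (x : E) : (c • a) x = c • a x := rfl
@[simp] theorem mul_apply (a b : Adj A E E) (x : E) : (a * b) x = a (b x) := rfl
@[simp] theorem one_apply (x : E) : (1 : Adj A E E) x = x := rfl
@[simp] theorem star_apply (a : Adj A E E) (x : E) : (star a) x = a.adj x := rfl

instance : AddCommGroup (Adj A E F) where
  add_assoc a b c := by ext x; simp [add_assoc]
  zero_add a := by ext x; simp
  add_zero a := by ext x; simp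
  add_comm a b := by ext x; simp [add_comm]
  neg_add_cancel a := by ext x; simp
  nsmul := nsmulRec
  zsmul := zsmulRec
  sub := fun a b => a + -b
  sub_eq_add_neg a b := rfl

instance : Module ℂ (Adj A E F) where
  one_smul a := by ext x; simp
  mul_smul c d a := by ext x; simp [mul_smul]
  smul_add c a b := by ext x; simp
  smul_zero c := by ext x; simp
  add_smul c d a := by ext x; simp [add_smul]
  zero_smul a := by ext x; simp

noncomputable instance : Norm (Adj A E F) := ⟨fun a => ‖a.toFun‖⟩

theorem norm_def (a : Adj A E F) : ‖a‖ = ‖a.toFun‖ := rfl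

end Adj

/-- The rank-one operator `x y* : z ↦ x ⟨y, z⟩`. -/
def rankOne (x y : E) : Adj A E E where
  toFun := LinearMap.mkContinuous
    { toFun := fun z => x <• (inner (𝕜 := A) y z : A)
      map_add' := fun z w => by
        show x <• (inner (𝕜 := A) y (z + w) : A)
          = x <• (inner (𝕜 := A) y z : A) + x <• (inner (𝕜 := A) y w : A)
        rw [RightCStarModule.inner_add_right, op_smul_add]
      map_smul' := fun c z => by
        show x <• (inner (𝕜 := A) y (c • z) : A) = c • (x <• (inner (𝕜 := A) y z : A))
        rw [RightCStarModule.inner_smul_right_complex, op_smul_csmul] }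
    (‖x‖ * ‖y‖)
    (fun z => by
      calc ‖x <• (inner (𝕜 := A) y z : A)‖ ≤ ‖x‖ * ‖(inner (𝕜 := A) y z : A)‖ :=
            norm_op_smul_le x _
        _ ≤ ‖x‖ * (‖y‖ * ‖z‖) := by gcongr; exact RightCStarModule.norm_inner_le E
        _ = ‖x‖ * ‖y‖ * ‖z‖ := by ring)
  adj := LinearMap.mkContinuous
    { toFun := fun z => y <• (inner (𝕜 := A) x z : A)
      map_add' := fun z w => by
        show y <• (inner (𝕜 := A) x (z + w) : A)
          = y <• (inner (𝕜 := A) x z : A) + y <• (inner (𝕜 := A) x w : A)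
        rw [RightCStarModule.inner_add_right, op_smul_add]
      map_smul' := fun c z => by
        show y <• (inner (𝕜 := A) x (c • z) : A) = c • (y <• (inner (𝕜 := A) x z : A))
        rw [RightCStarModule.inner_smul_right_complex, op_smul_csmul] }
    (‖y‖ * ‖x‖)
    (fun z => by
      calc ‖y <• (inner (𝕜 := A) x z : A)‖ ≤ ‖y‖ * ‖(inner (𝕜 := A) x z : A)‖ :=
            norm_op_smul_le y _
        _ ≤ ‖y‖ * (‖x‖ * ‖z‖) := by gcongr; exact RightCStarModule.norm_inner_le E
        _ = ‖y‖ * ‖x‖ * ‖z‖ := by ring)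
  inner_adj z w := by
    show (inner (𝕜 := A) (x <• (inner (𝕜 := A) y z : A)) w : A)
      = inner (𝕜 := A) z (y <• (inner (𝕜 := A) x w : A))
    rw [RightCStarModule.inner_op_smul_left, RightCStarModule.inner_op_smul_right]
    simp [mul_assoc]

theorem rankOne_apply (x y z : E) :
    (rankOne (A := A) x y) z = x <• (inner (𝕜 := A) y z : A) := rfl

/-- Finite-rank operators: the linear span of the rank-one operators. -/
def IsFiniteRank (a : Adj A E E) : Prop :=
  a ∈ Submodule.span ℂ {b : Adj A E E | ∃ x y : E, b = rankOne x y}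

/-- Compact operators: norm limits of finite-rank operators (identified via their
underlying continuous linear maps). -/
def IsCompactOp (a : Adj A E E) : Prop :=
  a.toFun ∈ closure ((fun b : Adj A E E => b.toFun) '' {b : Adj A E E | IsFiniteRank b})

/-- The range ideal `B_E`: the closed linear span of all inner products. -/
def rangeIdeal (A : Type*) [CStarAlgebra A] [PartialOrder A] [StarOrderedRing A]
    (E : Type*) [NormedAddCommGroup E] [NormedSpace ℂ E] [SMul Aᵐᵒᵖ E] [RightCStarModule A E] :
    Set A :=
  closure (Submodule.span ℂ {a : A | ∃ x y : E, a = inner (𝕜 := A) x y} : Set A)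

/-- `E` is full if the range ideal is all of `A`. -/
def IsFull (A : Type*) [CStarAlgebra A] [PartialOrder A] [StarOrderedRing A]
    (E : Type*) [NormedAddCommGroup E] [NormedSpace ℂ E] [SMul Aᵐᵒᵖ E] [RightCStarModule A E] :
    Prop :=
  rangeIdeal A E = Set.univ

end CStarMod

namespace CStarMod

variable {B : Type*} [CStarAlgebra B] [PartialOrder B] [StarOrderedRing B]
variable {C : Type*} [CStarAlgebra C] [PartialOrder C] [StarOrderedRing C]
variable {E : Type*} [NormedAddCommGroup E] [NormedSpace ℂ E] [SMul Bᵐᵒᵖ E] [RightCStarModule B E]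
variable {F : Type*} [NormedAddCommGroup F] [NormedSpace ℂ F] [SMul Cᵐᵒᵖ F] [RightCStarModule C F]

/-- A (*-)homomorphism between algebras of adjointable operators. -/
structure IsHom (ϑ : Adj B E E → Adj C F F) : Prop where
  map_add : ∀ a b, ϑ (a + b) = ϑ a + ϑ b
  map_smul : ∀ (c : ℂ) (a : Adj B E E), ϑ (c • a) = c • ϑ a
  map_mul : ∀ a b, ϑ (a * b) = ϑ a * ϑ b
  map_star : ∀ a, ϑ (star a) = star (ϑ a)

universe u

/-- A map between spaces of adjointable operators is *strict* if it is (*-strongly)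
continuous on bounded subsets: whenever a bounded net converges *-strongly, so do
the images.  (On bounded sets the strict and the *-strong topology coincide.) -/
def Strict {E' : Type*} [NormedAddCommGroup E'] [NormedSpace ℂ E'] [SMul Bᵐᵒᵖ E']
    [RightCStarModule B E'] {F' : Type*} [NormedAddCommGroup F'] [NormedSpace ℂ F']
    [SMul Cᵐᵒᵖ F'] [RightCStarModule C F'] (ϑ : Adj B E E' → Adj C F F') : Prop :=
  ∀ ⦃ι : Type u⦄ (l : Filter ι) (b : ι → Adj B E E') (a : Adj B E E'),
    (∃ M : ℝ, ∀ i, ‖b i‖ ≤ M) →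
    (∀ x : E, Filter.Tendsto (fun i => b i x) l (nhds (a x))) →
    (∀ x : E', Filter.Tendsto (fun i => (b i).adj x) l (nhds (a.adj x))) →
    (∀ y : F, Filter.Tendsto (fun i => ϑ (b i) y) l (nhds (ϑ a y))) ∧
      (∀ y : F', Filter.Tendsto (fun i => (ϑ (b i)).adj y) l (nhds ((ϑ a).adj y)))

/-- A correspondence from `B` to `C`: a Hilbert `C`-module together with a nondegenerate
left action of `B` by adjointable operators. -/
structure Corr (B : Type*) [CStarAlgebra B] [PartialOrder B] [StarOrderedRing B]
    (C : Type*) [CStarAlgebra C] [PartialOrder C] [StarOrderedRing C]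
    (F : Type*) [NormedAddCommGroup F] [NormedSpace ℂ F] [SMul Cᵐᵒᵖ F] [RightCStarModule C F] where
  act : B → Adj C F F
  map_add : ∀ a b, act (a + b) = act a + act b
  map_smul : ∀ (c : ℂ) (b : B), act (c • b) = c • act b
  map_mul : ∀ a b, act (a * b) = act a * act b
  map_star : ∀ b, act (star b) = star (act b)
  nondeg : Dense (↑(Submodule.span ℂ {y : F | ∃ (b : B) (z : F), y = (act b) z}) : Set F)

/-- Data exhibiting `T` as the interior tensor product `E ⊙ F` of the Hilbert `B`-module
`E` with the correspondence `F` from `B` to `C`:  a generating family of elementary tensors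
with the correct inner products. -/
structure TensorOf (ρ : Corr B C F) (E : Type*) [NormedAddCommGroup E] [NormedSpace ℂ E]
    [SMul Bᵐᵒᵖ E] [RightCStarModule B E] (T : Type*) [NormedAddCommGroup T] [NormedSpace ℂ T]
    [SMul Cᵐᵒᵖ T] [RightCStarModule C T] where
  t : E → F → T
  inner_t : ∀ (x x' : E) (y y' : F),
    inner (𝕜 := C) (t x y) (t x' y')
      = inner (𝕜 := C) y ((ρ.act (inner (𝕜 := B) x x')) y')
  total : Dense (↑(Submodule.span ℂ {s : T | ∃ x y, s = t x y}) : Set T)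

/-- Data exhibiting `T` as the two-fold interior tensor product `E ⊙ (E* ⊙ F)`, where the
left action of `K(E)` (hence of `B^a(E)`) on `F` is induced by `ϑ`:  a generating family of
elementary tensors `x₁ ⊙ (x₂* ⊙ y)` with the correct inner products
`⟨x₁ ⊙ (x₂* ⊙ y), x₁' ⊙ (x₂'* ⊙ y')⟩ = ⟨y, ϑ(x₂⟨x₁,x₁'⟩x₂'^*)y'⟩`. -/
structure Tensor3 (ϑ : Adj B E E → Adj C F F) (T : Type*) [NormedAddCommGroup T]
    [NormedSpace ℂ T] [SMul Cᵐᵒᵖ T] [RightCStarModule C T] where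
  t : E → E → F → T
  inner_t : ∀ (x₁ x₂ : E) (y : F) (x₁' x₂' : E) (y' : F),
    inner (𝕜 := C) (t x₁ x₂ y) (t x₁' x₂' y')
      = inner (𝕜 := C) y ((ϑ (rankOne (x₂ <• (inner (𝕜 := B) x₁ x₁' : B)) x₂')) y')
  total : Dense (↑(Submodule.span ℂ {s : T | ∃ x₁ x₂ y, s = t x₁ x₂ y}) : Set T)

end CStarMod

namespace CStarMod

variable {B : Type*} [CStarAlgebra B] [PartialOrder B] [StarOrderedRing B]
variable {C : Type*} [CStarAlgebra C] [PartialOrder C] [StarOrderedRing C]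
variable {E : Type*} [NormedAddCommGroup E] [NormedSpace ℂ E] [SMul Bᵐᵒᵖ E] [RightCStarModule B E]
variable {F : Type*} [NormedAddCommGroup F] [NormedSpace ℂ F] [SMul Cᵐᵒᵖ F] [RightCStarModule C F]

/-- For `x : E`, the adjointable operator `x̂ : B → E`, `b ↦ x <• b`, with adjoint
`y ↦ ⟨x, y⟩`.  (For `E = B` this is left multiplication by `x`.) -/
def xhat (x : E) : Adj B B E where
  toFun := LinearMap.mkContinuous
    { toFun := fun b => x <• b
      map_add' := fun a b => op_smul_add x a b
      map_smul' := fun c a => op_smul_csmul x c a }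
    ‖x‖ (fun a => norm_op_smul_le x a)
  adj := LinearMap.mkContinuous
    { toFun := fun y => (inner (𝕜 := B) x y : B)
      map_add' := fun y z => by simp
      map_smul' := fun c y => by simp }
    ‖x‖ (fun y => by
      simpa [mul_comm] using RightCStarModule.norm_inner_le (A := B) E (x := x) (y := y))
  inner_adj a y := by
    show (inner (𝕜 := B) (x <• a) y : B) = inner (𝕜 := B) a ((inner (𝕜 := B) x y : B))
    rw [RightCStarModule.inner_op_smul_left, RightCStarModule.inner_def]

theorem xhat_apply (x : E) (b : B) : (xhat x) b = x <• b := rfl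

/-- Left multiplication, as an adjointable operator on `B` viewed as a Hilbert module
over itself. -/
def leftMult (b : B) : Adj B B B := xhat b

/-- A bundled Hilbert C*-module over `B` (an object of the category `C*_B`). -/
structure HMod (B : Type*) [CStarAlgebra B] [PartialOrder B] [StarOrderedRing B] where
  carrier : Type*
  [grp : NormedAddCommGroup carrier]
  [mod : NormedSpace ℂ carrier]
  [sm : SMul Bᵐᵒᵖ carrier]
  [cstar : RightCStarModule B carrier]
  [cpl : CompleteSpace carrier]

attribute [instance] HMod.grp HMod.mod HMod.sm HMod.cstar HMod.cpl

/-- `B` as an object of `C*_B`. -/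
def HMod.self (B : Type*) [CStarAlgebra B] [PartialOrder B] [StarOrderedRing B] : HMod B :=
  { carrier := B }

universe v₁ v₂

/-- A `*`-functor from the category of Hilbert `B`-modules (morphisms: adjointable maps)
to the category of Hilbert `C`-modules: a functor commuting with adjoints. -/
structure StarFunctor (B : Type*) [CStarAlgebra B] [PartialOrder B] [StarOrderedRing B]
    (C : Type*) [CStarAlgebra C] [PartialOrder C] [StarOrderedRing C] where
  obj : HMod.{_, v₁} B → HMod.{_, v₂} C
  map : ∀ {X Y : HMod.{_, v₁} B}, Adj B X.carrier Y.carrier → Adj C (obj X).carrier (obj Y).carrier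
  map_id : ∀ X : HMod.{_, v₁} B, map (1 : Adj B X.carrier X.carrier) = 1
  map_comp : ∀ {X Y Z : HMod.{_, v₁} B} (g : Adj B Y.carrier Z.carrier) (f : Adj B X.carrier Y.carrier),
    map (g.comp f) = (map g).comp (map f)
  map_star : ∀ {X Y : HMod.{_, v₁} B} (f : Adj B X.carrier Y.carrier), map f.star' = (map f).star'

/-- A `*`-functor is *strict* if each of its restrictions to morphism spaces is strictly
(equivalently `*`-strongly) continuous on bounded subsets. -/
def StarFunctor.IsStrict {B : Type*} [CStarAlgebra B] [PartialOrder B] [StarOrderedRing B]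
    {C : Type*} [CStarAlgebra C] [PartialOrder C] [StarOrderedRing C]
    (r : StarFunctor B C) : Prop :=
  ∀ X Y : HMod B, Strict.{0} (fun f : Adj B X.carrier Y.carrier => r.map f)

/-- A Morita equivalence from `B` to `C`: a full correspondence `M` from `B` to `C` such
that the left action is an isomorphism of `B` onto the compact operators `K(M)`. -/
structure MoritaEq (B : Type*) [CStarAlgebra B] [PartialOrder B] [StarOrderedRing B]
    (C : Type*) [CStarAlgebra C] [PartialOrder C] [StarOrderedRing C] where
  M : Type*
  [grp : NormedAddCommGroup M]
  [mod : NormedSpace ℂ M]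
  [sm : SMul Cᵐᵒᵖ M]
  [cstar : RightCStarModule C M]
  [cpl : CompleteSpace M]
  ρ : Corr B C M
  full : IsFull C M
  act_compact : ∀ b : B, IsCompactOp (ρ.act b)
  act_surj_compact : ∀ a : Adj C M M, IsCompactOp a → ∃ b : B, ρ.act b = a
  act_inj : Function.Injective ρ.act

attribute [instance] MoritaEq.grp MoritaEq.mod MoritaEq.sm MoritaEq.cstar MoritaEq.cpl

/-- The orthogonal complement of a subset of a Hilbert C*-module. -/
def ortho (C : Type*) [CStarAlgebra C] [PartialOrder C] [StarOrderedRing C]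
    {F : Type*} [NormedAddCommGroup F] [NormedSpace ℂ F] [SMul Cᵐᵒᵖ F] [RightCStarModule C F]
    (S : Set F) : Set F :=
  {y : F | ∀ s ∈ S, (inner (𝕜 := C) s y : C) = 0}

/-- A Hilbert C*-module over a von Neumann algebra is *self-dual* (a W*-module) if every
bounded `C`-linear functional `F → C` is given by an inner product. -/
def IsSelfDual (C : Type*) [CStarAlgebra C] [PartialOrder C] [StarOrderedRing C]
    (F : Type*) [NormedAddCommGroup F] [NormedSpace ℂ F] [SMul Cᵐᵒᵖ F] [RightCStarModule C F] :
    Prop :=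
  ∀ Φ : F →L[ℂ] C, (∀ (y : F) (c : C), Φ (y <• c) = Φ y * c) →
    ∃! z : F, ∀ y : F, Φ y = inner (𝕜 := C) z y

/-- An adjointable (not assumed bounded) linear operator between (pre-)Hilbert modules. -/
structure AdjL (A : Type*) [CStarAlgebra A] [PartialOrder A] [StarOrderedRing A]
    (E : Type*) [NormedAddCommGroup E] [NormedSpace ℂ E] [SMul Aᵐᵒᵖ E] [RightCStarModule A E]
    (F : Type*) [NormedAddCommGroup F] [NormedSpace ℂ F] [SMul Aᵐᵒᵖ F] [RightCStarModule A F] where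
  toFun : E →ₗ[ℂ] F
  adj : F →ₗ[ℂ] E
  inner_adj : ∀ (x : E) (y : F), inner (𝕜 := A) (toFun x) y = inner (𝕜 := A) x (adj y)

end CStarMod

/-!
In `B^a(E)` rank-one operators compose as `(x₁x₂*)* (x₁'x₂'*) = x₂⟨x₁, x₁'⟩x₂'*`. Applying the
*-homomorphism `ϑ` therefore turns `ϑ(x₂⟨x₁, x₁'⟩x₂'*)` into `ϑ(x₁x₂*)* ϑ(x₁'x₂'*)`, and moving
`ϑ(x₁x₂*)*` across the inner product of `F` gives `⟨ϑ(x₁x₂*)y, ϑ(x₁'x₂'*)y'⟩`.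
-/

namespace CStarMod

section

variable {A : Type*} [CStarAlgebra A] [PartialOrder A] [StarOrderedRing A]
  {E : Type*} [NormedAddCommGroup E] [NormedSpace ℂ E] [SMul Aᵐᵒᵖ E] [RightCStarModule A E]

theorem op_smul_op_smul (x : E) (a b : A) : (x <• a) <• b = x <• (a * b) :=
  ext_inner_left (A := A) fun w => by
    simp only [RightCStarModule.inner_op_smul_right, mul_assoc]

theorem rankOne_adj_apply (x y z : E) :
    (rankOne (A := A) x y).adj z = y <• (inner A x z : A) := rfl

theorem star_rankOne_mul_rankOne (x₁ x₂ x₁' x₂' : E) :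
    star (rankOne (A := A) x₁ x₂) * rankOne x₁' x₂'
      = rankOne (x₂ <• (inner A x₁ x₁' : A)) x₂' := by
  ext z
  rw [Adj.mul_apply, Adj.star_apply, rankOne_apply, rankOne_adj_apply,
    RightCStarModule.inner_op_smul_right, ← op_smul_op_smul, rankOne_apply]

theorem Adj.inner_star_mul_apply (a b : Adj A E E) (y y' : E) :
    inner A y ((star a * b) y') = inner A (a y) (b y') :=
  (a.inner_adj_apply y (b y')).symm

end

theorem tensor_map_isometric_general
    {B : Type*} [CStarAlgebra B] [PartialOrder B] [StarOrderedRing B]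
    {C : Type*} [CStarAlgebra C] [PartialOrder C] [StarOrderedRing C]
    {E : Type*} [NormedAddCommGroup E] [NormedSpace ℂ E] [SMul Bᵐᵒᵖ E] [RightCStarModule B E]
    {F : Type*} [NormedAddCommGroup F] [NormedSpace ℂ F] [SMul Cᵐᵒᵖ F] [RightCStarModule C F]
    (ϑ : Adj B E E → Adj C F F) (hhom : IsHom ϑ) :
    ∀ (x₁ x₂ x₁' x₂' : E) (y y' : F),
      inner (𝕜 := C) y ((ϑ (rankOne (x₂ <• (inner (𝕜 := B) x₁ x₁' : B)) x₂')) y')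
        = inner (𝕜 := C) ((ϑ (rankOne x₁ x₂)) y) ((ϑ (rankOne x₁' x₂')) y') := by
  intro x₁ x₂ x₁' x₂' y y'
  rw [← star_rankOne_mul_rankOne, hhom.map_mul, hhom.map_star, Adj.inner_star_mul_apply]

/-- The map `x₁ ⊙ (x₂* ⊙ y) ↦ ϑ(x₁x₂*)y` is isometric:
`⟨x₁ ⊙ (x₂* ⊙ y), x₁' ⊙ (x₂'* ⊙ y')⟩ = ⟨y, ϑ(x₂⟨x₁,x₁'⟩x₂'^*)y'⟩
  = ⟨ϑ(x₁x₂*)y, ϑ(x₁'x₂'*)y'⟩`. -/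
theorem tensor_map_isometric
    {B : Type*} [CStarAlgebra B] [PartialOrder B] [StarOrderedRing B]
    {C : Type*} [CStarAlgebra C] [PartialOrder C] [StarOrderedRing C]
    {E : Type*} [NormedAddCommGroup E] [NormedSpace ℂ E] [SMul Bᵐᵒᵖ E] [RightCStarModule B E]
    [CompleteSpace E]
    {F : Type*} [NormedAddCommGroup F] [NormedSpace ℂ F] [SMul Cᵐᵒᵖ F] [RightCStarModule C F]
    [CompleteSpace F]
    (ϑ : Adj B E E → Adj C F F) (hhom : IsHom ϑ) (hunital : ϑ 1 = 1) (hstrict : Strict ϑ) :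
    ∀ (x₁ x₂ x₁' x₂' : E) (y y' : F),
      inner (𝕜 := C) y ((ϑ (rankOne (x₂ <• (inner (𝕜 := B) x₁ x₁' : B)) x₂')) y')
        = inner (𝕜 := C) ((ϑ (rankOne x₁ x₂)) y) ((ϑ (rankOne x₁' x₂')) y') :=
  tensor_map_isometric_general ϑ hhom

end CStarMod
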